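/- arXiv:2209.05100 — 3 statements merged into one kernel-verified Lean document; each statement's English description precedes it below -/
import Mathlib

section
/- Let N ≥ 4 be an integer and let h_N(z) = 1 + (2−N)(z + z²), viewed as a polynomial over ℂ. Then h_N has exactly one root in the open disk {z ∈ ℂ : |z| < (φ−1)²}, where φ = (1+√5)/2 is the golden ratio (so (φ−1)² = (3−√5)/2), and this root is real and positive. -/
open Polynomial Filter

namespace Paper

/-- The number of elements of word length `ℓ` in the Coxeter group of the Coxeter
matrix `M` (with respect to the simple reflections). -/
noncomputable def growthCount {B : Type*} (M : CoxeterMatrix B) (ℓ : ℕ) : ℕ :=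
  Nat.card {w : M.Group // M.toCoxeterSystem.length w = ℓ}

/-- The growth rate τ(Γ,S) = limsup_{ℓ→∞} a_ℓ^{1/ℓ}. -/
noncomputable def growthRate {B : Type*} (M : CoxeterMatrix B) : ℝ :=
  Filter.limsup (fun ℓ : ℕ => (growthCount M ℓ : ℝ) ^ (1 / (ℓ : ℝ))) Filter.atTop

/-- The growth series f(z) = Σ_{ℓ≥0} a_ℓ z^ℓ as a formal power series over ℤ. -/
noncomputable def growthSeries {B : Type*} (M : CoxeterMatrix B) : PowerSeries ℤ :=
  PowerSeries.mk fun ℓ => (growthCount M ℓ : ℤ)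

/-- The cosine matrix of a Coxeter system: entry −cos(π/k_ij), interpreted as −1
when k_ij = ∞ (which is encoded by `0` in a Mathlib `CoxeterMatrix`). -/
noncomputable def cosineMatrix {B : Type*} (M : CoxeterMatrix B) : Matrix B B ℝ :=
  fun i j => if M i j = 0 then -1 else -Real.cos (Real.pi / (M i j : ℝ))

/-- A Coxeter system has dimension at most 2 iff every subset of at least 3 of the
generators generates an infinite subgroup. -/
def DimAtMost2 {B : Type*} (M : CoxeterMatrix B) : Prop :=
  ∀ T : Finset B, 3 ≤ T.card →
    (Subgroup.closure (M.simple '' (T : Set B)) : Set M.Group).Infinite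

/-- The number E of unordered pairs {i,j}, i ≠ j, with k_ij < ∞. -/
noncomputable def edgeCount {N : ℕ} (M : CoxeterMatrix (Fin N)) : ℕ :=
  (Finset.univ.filter fun p : Fin N × Fin N => p.1 < p.2 ∧ M p.1 p.2 ≠ 0).card

/-- The Euler characteristic χ(L(Γ,S)) = N − E of the nerve of a Coxeter system of
dimension at most 2. -/
noncomputable def eulerChar {N : ℕ} (M : CoxeterMatrix (Fin N)) : ℤ :=
  (N : ℤ) - (edgeCount M : ℤ)

/-- A Salem number: a real algebraic integer τ > 1 of degree at least 4 such that τ⁻¹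
is a Galois conjugate of τ and all Galois conjugates other than τ, τ⁻¹ lie on the unit
circle. -/
def IsSalemNum (τ : ℝ) : Prop :=
  1 < τ ∧ IsIntegral ℤ τ ∧ 4 ≤ (minpoly ℤ τ).natDegree ∧
    Polynomial.aeval τ⁻¹ (minpoly ℤ τ) = 0 ∧
    ∀ z : ℂ, Polynomial.aeval z (minpoly ℤ τ) = 0 →
      z ≠ (τ : ℂ) → z ≠ ((τ⁻¹ : ℝ) : ℂ) → ‖z‖ = 1

/-- A Pisot number: a real algebraic integer τ > 1 all of whose Galois conjugates
other than τ itself have modulus < 1 (this includes rational integers τ > 1). -/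
def IsPisotNum (τ : ℝ) : Prop :=
  1 < τ ∧ IsIntegral ℤ τ ∧
    ∀ z : ℂ, Polynomial.aeval z (minpoly ℤ τ) = 0 → z ≠ (τ : ℂ) → ‖z‖ < 1

/-- A Perron number: a real algebraic integer τ > 1 all of whose Galois conjugates
other than τ itself have modulus < τ (this includes rational integers τ > 1). -/
def IsPerronNum (τ : ℝ) : Prop :=
  1 < τ ∧ IsIntegral ℤ τ ∧
    ∀ z : ℂ, Polynomial.aeval z (minpoly ℤ τ) = 0 → z ≠ (τ : ℂ) → ‖z‖ < τ

/-- A Salem polynomial: the minimal polynomial over ℤ of a Salem number. -/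
def IsSalemPoly (p : Polynomial ℤ) : Prop := ∃ τ : ℝ, IsSalemNum τ ∧ p = minpoly ℤ τ

/-- A Pisot polynomial: the minimal polynomial over ℤ of a Pisot number. -/
def IsPisotPoly (p : Polynomial ℤ) : Prop := ∃ τ : ℝ, IsPisotNum τ ∧ p = minpoly ℤ τ

/-- `p` is a product of cyclotomic polynomials and exactly one Salem polynomial. -/
def IsCycloSalemProd (p : Polynomial ℤ) : Prop :=
  ∃ (l : Multiset ℕ) (s : Polynomial ℤ), (∀ n ∈ l, 0 < n) ∧ IsSalemPoly s ∧
    p = s * (l.map fun n => cyclotomic n ℤ).prod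

/-- `p` is a product of cyclotomic polynomials and exactly one Pisot polynomial. -/
def IsCycloPisotProd (p : Polynomial ℤ) : Prop :=
  ∃ (l : Multiset ℕ) (q : Polynomial ℤ), (∀ n ∈ l, 0 < n) ∧ IsPisotPoly q ∧
    p = q * (l.map fun n => cyclotomic n ℤ).prod

/-- Order comparison of labels in {1,2,…} ∪ {∞}, where ∞ is encoded by `0`. -/
def OrdLE (a b : ℕ) : Prop := b = 0 ∨ (a ≠ 0 ∧ a ≤ b)

/-- McMullen's partial order ⪯ on Coxeter systems: an injection of the generators
which does not decrease the orders of products of pairs of generators. -/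
def CoxLE {B B' : Type*} (M : CoxeterMatrix B) (M' : CoxeterMatrix B') : Prop :=
  ∃ ι : B → B', Function.Injective ι ∧ ∀ i j, OrdLE (M i j) (M' (ι i) (ι j))

/-- Convergence of a sequence of labels in {1,2,…} ∪ {∞} (∞ encoded by `0`):
eventually equal when the limit is finite; tending to infinity when the limit is ∞. -/
def LabelTendsto (f : ℕ → ℕ) (m : ℕ) : Prop :=
  if m = 0 then ∀ C : ℕ, ∀ᶠ n in Filter.atTop, f n = 0 ∨ C ≤ f n
  else ∀ᶠ n in Filter.atTop, f n = m

/-- The underlying graph of the presentation diagram: an edge joins `i ≠ j` iff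
`k_ij < ∞`. -/
def presGraph {B : Type*} (M : CoxeterMatrix B) : SimpleGraph B where
  Adj i j := i ≠ j ∧ M i j ≠ 0
  symm := by
    constructor
    intro i j h
    exact ⟨h.1.symm, by rw [M.symmetric]; exact h.2⟩
  loopless := by constructor; intro i h; exact h.1 rfl

/-- The polynomial [m] = 1 + z + ⋯ + z^{m−1}. -/
noncomputable def qint (m : ℕ) : Polynomial ℤ :=
  ∑ i ∈ Finset.range m, Polynomial.X ^ i

/-! With `c = N - 2`, the roots of `h_N` are those of `z + z² = 1/c`: a positive real `x` and
`-1 - x`. As `t ↦ t + t²` is increasing on `[0, ∞)` and `1/c ≤ 1/2 < r + r²` for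
`r = (3 - √5)/2`, the root `x` lies in the disk, whereas `‖-1 - x‖ = 1 + x > 1 > r`. -/

theorem eq_or_eq_neg_one_sub_of_add_sq_eq {K : Type*} [CommRing K] [IsDomain K] {w x : K}
    (h : w + w ^ 2 = x + x ^ 2) : w = x ∨ w = -1 - x := by
  have hfac : (w - x) * (w - (-1 - x)) = 0 := by linear_combination h
  rcases mul_eq_zero.mp hfac with hx | hx
  · exact Or.inl (sub_eq_zero.mp hx)
  · exact Or.inr (sub_eq_zero.mp hx)

theorem exists_pos_add_sq_eq {a : ℝ} (ha : 0 < a) : ∃ x : ℝ, 0 < x ∧ x + x ^ 2 = a := by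
  have hsq : Real.sqrt (1 + 4 * a) ^ 2 = 1 + 4 * a := Real.sq_sqrt (by linarith)
  have hgt : 1 < Real.sqrt (1 + 4 * a) := Real.lt_sqrt_of_sq_lt (by linarith)
  exact ⟨(Real.sqrt (1 + 4 * a) - 1) / 2, by linarith, by linear_combination hsq / 4⟩

theorem lt_of_add_sq_lt_add_sq {x y : ℝ} (hy : 0 ≤ y) (h : x + x ^ 2 < y + y ^ 2) : x < y := by
  by_contra! hyx
  nlinarith

theorem three_sub_sqrt_five_div_two_mem_Ioo : (3 - Real.sqrt 5) / 2 ∈ Set.Ioo 0 1 := by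
  have h1 : 1 < Real.sqrt 5 := Real.lt_sqrt_of_sq_lt (by norm_num)
  have h3 : Real.sqrt 5 < 3 := (Real.sqrt_lt' (by norm_num)).mpr (by norm_num)
  constructor <;> linarith

theorem one_half_lt_add_sq_three_sub_sqrt_five_div_two :
    1 / 2 < (3 - Real.sqrt 5) / 2 + ((3 - Real.sqrt 5) / 2) ^ 2 := by
  have h5 : Real.sqrt 5 ^ 2 = 5 := Real.sq_sqrt (by norm_num)
  have hlt : Real.sqrt 5 < 9 / 4 := by nlinarith [Real.sqrt_nonneg 5]
  nlinarith

/-- for N ≥ 4 the polynomial h_N(z) = 1 + (2−N)(z+z²) has exactly one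
root in the open disk of radius (φ−1)² = (3−√5)/2, and this root is real and
positive. -/
theorem hN_unique_root_in_disk (N : ℕ) (hN : 4 ≤ N) :
    ∃ z : ℂ,
      (‖z‖ < (3 - Real.sqrt 5) / 2 ∧ 1 + (2 - (N : ℂ)) * (z + z ^ 2) = 0) ∧
      (∀ w : ℂ, ‖w‖ < (3 - Real.sqrt 5) / 2 →
        1 + (2 - (N : ℂ)) * (w + w ^ 2) = 0 → w = z) ∧
      z.im = 0 ∧ 0 < z.re := by
  obtain ⟨hr0, hr1⟩ := three_sub_sqrt_five_div_two_mem_Ioo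
  have hc : (2 : ℝ) ≤ N - 2 := by
    have : (4 : ℝ) ≤ N := by exact_mod_cast hN
    linarith
  obtain ⟨x, hx0, hx⟩ := exists_pos_add_sq_eq (one_div_pos.mpr (by linarith : (0 : ℝ) < N - 2))
  have hxr : x < (3 - Real.sqrt 5) / 2 := lt_of_add_sq_lt_add_sq hr0.le <| calc
    x + x ^ 2 = 1 / ((N : ℝ) - 2) := hx
    _ ≤ 1 / 2 := one_div_le_one_div_of_le two_pos hc
    _ < _ := one_half_lt_add_sq_three_sub_sqrt_five_div_two
  have hNC : (N : ℂ) - 2 ≠ 0 := by exact_mod_cast (by linarith : (N : ℝ) - 2 ≠ 0)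
  have hxC : ((N : ℂ) - 2) * ((x : ℂ) + (x : ℂ) ^ 2) = 1 := by
    rw [show (x : ℂ) + (x : ℂ) ^ 2 = 1 / ((N : ℂ) - 2) by exact_mod_cast hx, mul_one_div_cancel hNC]
  refine ⟨x, ⟨?_, by linear_combination -hxC⟩, fun w hw hroot => ?_, by simp, by simpa using hx0⟩
  · rwa [Complex.norm_real, Real.norm_of_nonneg hx0.le]
  have hsum : w + w ^ 2 = x + x ^ 2 := mul_left_cancel₀ hNC (by linear_combination -hroot - hxC)
  refine (eq_or_eq_neg_one_sub_of_add_sq_eq hsum).resolve_right fun hw' => ?_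
  have hnorm : ‖w‖ = 1 + x := by
    rw [hw', show (-1 - x : ℂ) = ((-1 - x : ℝ) : ℂ) by push_cast; ring, Complex.norm_real,
      Real.norm_eq_abs, abs_of_neg (by linarith)]
    ring
  linarith

end Paper
end

section
/- Let N ≥ 9 and k ≥ 3 be integers, let a be a real number with 1 < a ≤ (1+φ)²/3, and set r = (φ−1)², where φ = (1+√5)/2 is the golden ratio. Then for every z ∈ ℂ with |z| = r, |1 + (2−N)(z + z²)| > (N−2)(r³ + r⁴ + ⋯ + r^{k−1}) + (a−1)(N−1) r^k, where the sum r³ + ⋯ + r^{k−1} is empty (equal to 0) when k = 3. -/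
open Polynomial Filter

namespace Paper

open Real
open scoped goldenRatio

/-!
Write `ρ = (φ - 1)² = 2 - φ` and `c = N - 2`. On the circle `|z| = ρ` the modulus
`|1 - c (z + z²)|` is smallest at `z = -ρ`, where it equals `1 + c (ρ - ρ²)`; this needs
`c ρ² ≥ 1`, i.e. `c ≥ φ⁴ ≈ 6.85`, whence `N ≥ 9`. On the other side the geometric tail is at
most `ρ³ / (1 - ρ)`, `ρ^k ≤ ρ³` and `a - 1 ≤ φ - 1/3`, so the left-hand side is bounded by an
affine function of `c` whose slope and intercept are both smaller than those of `1 + c (ρ - ρ²)`.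
-/

theorem le_norm_one_sub_mul_add_sq {z : ℂ} {c r : ℝ} (hz : ‖z‖ = r) (hc : 0 ≤ c)
    (hcr : 1 ≤ c * r ^ 2) : 1 + c * (r - r ^ 2) ≤ ‖1 - c * (z + z ^ 2)‖ := by
  have hre : |z.re| ≤ r := hz ▸ Complex.abs_re_le_norm z
  have hcircle : z.re ^ 2 + z.im ^ 2 = r ^ 2 := by
    rw [← hz, Complex.sq_norm, Complex.normSq_apply]; ring
  have hidentity : ‖1 - c * (z + z ^ 2)‖ ^ 2
      = (1 + c * (r - r ^ 2)) ^ 2 + 2 * c * (z.re + r) * (2 * (r - z.re) + c * r ^ 2 - 1) := by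
    rw [Complex.sq_norm, Complex.normSq_apply]
    simp only [Complex.sub_re, Complex.sub_im, Complex.mul_re, Complex.mul_im, Complex.add_re,
      Complex.add_im, Complex.ofReal_re, Complex.ofReal_im, Complex.one_re, Complex.one_im, sq]
    linear_combination (2 * c * (1 - c * (z.re + z.re ^ 2)) + c ^ 2 * (z.im ^ 2 + r ^ 2 - z.re ^ 2)
      + c ^ 2 * (1 + 2 * z.re) ^ 2) * hcircle
  have hslack : 0 ≤ 2 * c * (z.re + r) * (2 * (r - z.re) + c * r ^ 2 - 1) := by
    obtain ⟨hre_lower, hre_upper⟩ := abs_le.mp hre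
    have : 0 ≤ z.re + r := by linarith
    have : 0 ≤ 2 * (r - z.re) + c * r ^ 2 - 1 := by linarith
    positivity
  exact le_of_sq_le_sq (by linarith) (norm_nonneg _)

theorem one_le_seven_mul_two_sub_goldenRatio_sq : 1 ≤ 7 * (2 - φ) ^ 2 := by
  nlinarith [goldenRatio_sq, goldenRatio_pos]

theorem two_sub_goldenRatio_tail_bound_lt {c : ℝ} (hc : 0 ≤ c) :
    c * ((2 - φ) ^ 3 / (1 - (2 - φ))) + ((1 + φ) ^ 2 / 3 - 1) * (c + 1) * (2 - φ) ^ 3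
      < 1 + c * ((2 - φ) - (2 - φ) ^ 2) := by
  have hφ := goldenRatio_sq
  have hφ_lt : φ < 1.62 := by nlinarith [goldenRatio_pos]
  have hsq : (2 - φ) ^ 2 = 5 - 3 * φ := by linear_combination hφ
  have hcube : (2 - φ) ^ 3 = 13 - 8 * φ := by linear_combination (5 - φ) * hφ
  have hgeom : (2 - φ) ^ 3 / (1 - (2 - φ)) = 5 * φ - 8 := by
    rw [div_eq_iff (by linarith [one_lt_goldenRatio]), hcube]
    linear_combination (-5 : ℝ) * hφ
  have hcoef : (1 + φ) ^ 2 / 3 - 1 = φ - 1 / 3 := by linear_combination hφ / 3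
  rw [hgeom, hcoef, hcube, hsq]
  nlinarith

/-- the key inequality |h_N(z)| > |R_{k,N}|-bound on the circle
|z| = (φ−1)² used in the Rouché argument of Theorem 5.1 of the paper. -/
theorem rouche_inequality (N k : ℕ) (hN : 9 ≤ N) (hk : 3 ≤ k)
    (a : ℝ) (ha1 : 1 < a) (ha2 : a ≤ (1 + (1 + Real.sqrt 5) / 2) ^ 2 / 3) :
    ∀ z : ℂ, ‖z‖ = (3 - Real.sqrt 5) / 2 →
      ((N : ℝ) - 2) * (∑ i ∈ Finset.Ico 3 k, ((3 - Real.sqrt 5) / 2) ^ i) +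
          (a - 1) * ((N : ℝ) - 1) * ((3 - Real.sqrt 5) / 2) ^ k
        < ‖1 + (2 - (N : ℂ)) * (z + z ^ 2)‖ := by
  intro z hz
  change a ≤ (1 + φ) ^ 2 / 3 at ha2
  rw [show (3 - √5) / 2 = 2 - φ by ring] at hz ⊢
  have hρ_pos : 0 < 2 - φ := by linarith [goldenRatio_lt_two]
  have hρ_lt_one : 2 - φ < 1 := by linarith [one_lt_goldenRatio]
  set c : ℝ := N - 2 with hc_def
  have hc : 7 ≤ c := by
    have : (9 : ℝ) ≤ N := by exact_mod_cast hN
    linarith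
  rw [show 1 + (2 - (N : ℂ)) * (z + z ^ 2) = 1 - c * (z + z ^ 2) by rw [hc_def]; push_cast; ring,
    show (N : ℝ) - 1 = c + 1 by ring]
  calc _ ≤ c * ((2 - φ) ^ 3 / (1 - (2 - φ))) + ((1 + φ) ^ 2 / 3 - 1) * (c + 1) * (2 - φ) ^ 3 := by
        gcongr c * ?_ + ?_ * _ * ?_
        · exact geom_sum_Ico_le_of_lt_one hρ_pos.le hρ_lt_one
        · exact mul_nonneg (by linarith) (by linarith)
        · linarith
        · exact pow_le_pow_of_le_one hρ_pos.le hρ_lt_one.le hk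
    _ < 1 + c * ((2 - φ) - (2 - φ) ^ 2) := two_sub_goldenRatio_tail_bound_lt (by linarith)
    _ ≤ _ := le_norm_one_sub_mul_add_sq hz (by linarith)
        (by nlinarith [one_le_seven_mul_two_sub_goldenRatio_sq])

end Paper
end

section
/- Let N ≥ 9 and k ≥ 3 be integers and let a be a real number with 1 < a ≤ (1+φ)²/3, where φ = (1+√5)/2 is the golden ratio. Then the polynomial P(z) = 1 + (2−N)(z + z² + ⋯ + z^{k−1}) + (a−1)(N−1) z^k has exactly one root in the open disk {z ∈ ℂ : |z| < (φ−1)²}, and this root is real. -/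
open Polynomial Filter

namespace Paper

/-!
Multiplying `P(z) = 1 + b (z + ⋯ + z^{k-1}) + c z^k` by `1 - z` turns `P(z) = 0` into the
fixed-point equation `(1 - b) z = 1 + (c - b) z^k - c z^{k+1}`, where `b = 2 - N` and
`c = (a - 1)(N - 1) ≤ 1.285 (1 - b)`. Since `k ≥ 3`, the right-hand side is tiny on the disk:
the triangle inequality pushes every root of modulus `≤ 0.382` (which exceeds `(φ - 1)²`) into
the disk `|z| ≤ 0.28`, and there the right-hand side divided by `1 - b` is a contraction, so it has
at most one fixed point. A real root in `(0, 1/3)` comes from the intermediate value theorem, and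
`1/3 < (φ - 1)²`.
-/

open Finset

/-- `P(z)` of the statement is `growthDenom k (2 - N) ((a - 1) * (N - 1)) z`. -/
noncomputable def growthDenom {R : Type*} [CommRing R] (k : ℕ) (b c z : R) : R :=
  1 + b * ∑ i ∈ Ico 1 k, z ^ i + c * z ^ k

lemma map_growthDenom {R S : Type*} [CommRing R] [CommRing S] (f : R →+* S) (k : ℕ) (b c z : R) :
    f (growthDenom k b c z) = growthDenom k (f b) (f c) (f z) := by
  simp [growthDenom, map_sum]

lemma continuous_growthDenom {R : Type*} [CommRing R] [TopologicalSpace R] [IsTopologicalRing R]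
    (k : ℕ) (b c : R) : Continuous (growthDenom k b c) := by
  unfold growthDenom
  fun_prop

lemma one_sub_mul_eq_of_growthDenom_eq_zero {R : Type*} [CommRing R] {k : ℕ} (hk : 1 ≤ k)
    {b c z : R} (h : growthDenom k b c z = 0) :
    (1 - b) * z = 1 + (c - b) * z ^ k - c * z ^ (k + 1) := by
  have hgeom := geom_sum_Ico_mul_neg z hk
  unfold growthDenom at h
  linear_combination (z - 1) * h + b * hgeom

lemma norm_pow_succ_sub_pow_succ_le {R : Type*} [NormedCommRing R] [NormOneClass R] {z w : R}
    {M : ℝ} (hz : ‖z‖ ≤ M) (hw : ‖w‖ ≤ M) (k : ℕ) :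
    ‖z ^ (k + 1) - w ^ (k + 1)‖ ≤ (k + 1) * M ^ k * ‖z - w‖ := by
  have hM : 0 ≤ M := (norm_nonneg z).trans hz
  rw [← geom_sum₂_mul, Nat.add_sub_cancel]
  refine (norm_mul_le _ _).trans (mul_le_mul_of_nonneg_right ?_ (norm_nonneg _))
  calc ‖∑ i ∈ range (k + 1), z ^ i * w ^ (k - i)‖
      ≤ ∑ i ∈ range (k + 1), M ^ k := by
        refine norm_sum_le_of_le _ fun i hi => ?_
        calc ‖z ^ i * w ^ (k - i)‖ ≤ M ^ i * M ^ (k - i) :=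
              (norm_mul_le _ _).trans <| mul_le_mul
                ((norm_pow_le _ _).trans (pow_le_pow_left₀ (norm_nonneg _) hz _))
                ((norm_pow_le _ _).trans (pow_le_pow_left₀ (norm_nonneg _) hw _))
                (norm_nonneg _) (pow_nonneg hM _)
          _ = M ^ k := by
            rw [← pow_add, Nat.add_sub_cancel' (Nat.lt_succ_iff.mp (mem_range.mp hi))]
    _ = (k + 1) * M ^ k := by simp

lemma succ_mul_pow_le {ρ : ℝ} (hρ : 0 ≤ ρ) {n : ℕ} (hn : (n + 2) * ρ ≤ n + 1) {k : ℕ}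
    (hk : n ≤ k) : (k + 1) * ρ ^ k ≤ (n + 1) * ρ ^ n := by
  induction k, hk using Nat.le_induction with
  | base => rfl
  | succ k hk ih =>
    have hk' : (n : ℝ) ≤ k := by exact_mod_cast hk
    have hstep : (k + 2) * ρ ≤ k + 1 := by nlinarith
    calc ((k + 1 : ℕ) + 1 : ℝ) * ρ ^ (k + 1) = ((k + 2) * ρ) * ρ ^ k := by push_cast; ring
      _ ≤ (k + 1) * ρ ^ k := by gcongr
      _ ≤ (n + 1) * ρ ^ n := ih

lemma exists_root_growthDenom {b c : ℝ} (hb : b ≤ -7) (hc₀ : 0 ≤ c) (hc : c ≤ 1.285 * (1 - b))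
    {k : ℕ} (hk : 3 ≤ k) : ∃ x ∈ Set.Ioo (0 : ℝ) (1 / 3), growthDenom k b c x = 0 := by
  have h₀ : growthDenom k b c 0 = 1 := by
    have hsum : ∑ i ∈ Ico 1 k, (0 : ℝ) ^ i = 0 :=
      sum_eq_zero fun i hi => zero_pow (by simp at hi; omega)
    simp [growthDenom, hsum, show k ≠ 0 by omega]
  have hthird : growthDenom k b c (1 / 3) < 0 := by
    have hsum : ∑ i ∈ Ico 1 3, (1 / 3 : ℝ) ^ i ≤ ∑ i ∈ Ico 1 k, (1 / 3 : ℝ) ^ i :=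
      sum_le_sum_of_subset_of_nonneg (Ico_subset_Ico le_rfl hk) fun _ _ _ => by positivity
    have hpow : (1 / 3 : ℝ) ^ k ≤ (1 / 3) ^ 3 :=
      pow_le_pow_of_le_one (by norm_num) (by norm_num) hk
    rw [show Ico 1 3 = {1, 2} from rfl] at hsum
    norm_num at hsum
    unfold growthDenom
    nlinarith
  obtain ⟨x, hx, hx₀⟩ := intermediate_value_Ioo' (by norm_num)
    (continuous_growthDenom k b c).continuousOn
    (show (0 : ℝ) ∈ Set.Ioo _ _ from ⟨hthird, h₀ ▸ one_pos⟩)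
  exact ⟨x, hx, hx₀⟩

lemma norm_le_of_growthDenom_eq_zero {b c : ℝ} (hb : b ≤ -7) (hc₀ : 0 ≤ c)
    (hc : c ≤ 1.285 * (1 - b)) {k : ℕ} (hk : 3 ≤ k) {z : ℂ} (hz : ‖z‖ ≤ 0.382)
    (h : growthDenom k (b : ℂ) c z = 0) : ‖z‖ ≤ 0.28 := by
  have hz₁ : ‖z‖ ≤ 1 := hz.trans (by norm_num)
  have hzk : ‖z‖ ^ k ≤ 0.382 ^ 3 :=
    (pow_le_pow_of_le_one (norm_nonneg _) hz₁ hk).trans (by gcongr)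
  have hzk₁ : ‖z‖ ^ (k + 1) ≤ 0.382 ^ 4 :=
    (pow_le_pow_of_le_one (norm_nonneg _) hz₁ (by omega : 4 ≤ k + 1)).trans (by gcongr)
  have hfix := one_sub_mul_eq_of_growthDenom_eq_zero (by omega) h
  have hest : (1 - b) * ‖z‖ ≤ 1 + (c - b) * ‖z‖ ^ k + c * ‖z‖ ^ (k + 1) :=
    calc (1 - b) * ‖z‖ = ‖((1 - b : ℝ) : ℂ) * z‖ := by
          rw [norm_mul, Complex.norm_real, Real.norm_of_nonneg (by linarith)]
      _ = ‖1 + ((c - b : ℝ) : ℂ) * z ^ k - (c : ℂ) * z ^ (k + 1)‖ := by push_cast; rw [hfix]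
      _ ≤ ‖(1 : ℂ)‖ + ‖((c - b : ℝ) : ℂ) * z ^ k‖ + ‖(c : ℂ) * z ^ (k + 1)‖ :=
          norm_sub_le_of_le (norm_add_le _ _) le_rfl
      _ = 1 + (c - b) * ‖z‖ ^ k + c * ‖z‖ ^ (k + 1) := by
          simp only [norm_one, norm_mul, norm_pow, Complex.norm_real,
            Real.norm_of_nonneg hc₀, Real.norm_of_nonneg (by linarith : 0 ≤ c - b)]
  nlinarith

lemma eq_of_growthDenom_eq_zero {b c : ℝ} (hb : b ≤ 0) (hc₀ : 0 ≤ c)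
    (hc : c ≤ 1.285 * (1 - b)) {k : ℕ} (hk : 3 ≤ k) {z w : ℂ} (hz : ‖z‖ ≤ 0.28)
    (hw : ‖w‖ ≤ 0.28) (hz₀ : growthDenom k (b : ℂ) c z = 0)
    (hw₀ : growthDenom k (b : ℂ) c w = 0) : z = w := by
  obtain ⟨m, rfl⟩ : ∃ m, k = m + 1 := ⟨k - 1, by omega⟩
  have hdiff : ((1 - b : ℝ) : ℂ) * (z - w) =
      ((c - b : ℝ) : ℂ) * (z ^ (m + 1) - w ^ (m + 1)) - c * (z ^ (m + 2) - w ^ (m + 2)) := by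
    push_cast
    linear_combination one_sub_mul_eq_of_growthDenom_eq_zero (by omega) hz₀ -
      one_sub_mul_eq_of_growthDenom_eq_zero (by omega) hw₀
  have h₁ : ‖z ^ (m + 1) - w ^ (m + 1)‖ ≤ 0.2352 * ‖z - w‖ := by
    have hm := succ_mul_pow_le (ρ := 0.28) (n := 2) (by norm_num) (by norm_num) (by omega : 2 ≤ m)
    exact (norm_pow_succ_sub_pow_succ_le hz hw m).trans
      (mul_le_mul_of_nonneg_right (hm.trans_eq (by norm_num)) (norm_nonneg _))
  have h₂ : ‖z ^ (m + 2) - w ^ (m + 2)‖ ≤ 0.087808 * ‖z - w‖ := by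
    have hm :=
      succ_mul_pow_le (ρ := 0.28) (n := 3) (by norm_num) (by norm_num) (by omega : 3 ≤ m + 1)
    exact (norm_pow_succ_sub_pow_succ_le hz hw (m + 1)).trans
      (mul_le_mul_of_nonneg_right (hm.trans_eq (by norm_num)) (norm_nonneg _))
  have hest : (1 - b) * ‖z - w‖ ≤
      (c - b) * ‖z ^ (m + 1) - w ^ (m + 1)‖ + c * ‖z ^ (m + 2) - w ^ (m + 2)‖ :=
    calc (1 - b) * ‖z - w‖ = ‖((1 - b : ℝ) : ℂ) * (z - w)‖ := by
          rw [norm_mul, Complex.norm_real, Real.norm_of_nonneg (by linarith)]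
      _ ≤ _ := by
          rw [hdiff]
          refine (norm_sub_le _ _).trans_eq ?_
          simp only [norm_mul, Complex.norm_real,
            Real.norm_of_nonneg hc₀, Real.norm_of_nonneg (by linarith : 0 ≤ c - b)]
  have ht : ‖z - w‖ ≤ 0 := by nlinarith [norm_nonneg (z - w)]
  exact sub_eq_zero.mp (norm_le_zero_iff.mp ht)

/-- the denominator polynomial
P(z) = 1 + (2−N)(z + ⋯ + z^{k−1}) + (a−1)(N−1)z^k of the growth series of the
Coxeter systems of Theorem 5.1 has exactly one root in the open disk of radius
(φ−1)², and this root is real. -/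
theorem denominator_unique_root_in_disk (N k : ℕ) (hN : 9 ≤ N) (hk : 3 ≤ k)
    (a : ℝ) (ha1 : 1 < a) (ha2 : a ≤ (1 + (1 + Real.sqrt 5) / 2) ^ 2 / 3) :
    ∃ z : ℂ,
      (‖z‖ < (3 - Real.sqrt 5) / 2 ∧
        1 + (2 - (N : ℂ)) * (∑ i ∈ Finset.Ico 1 k, z ^ i) +
          ((a : ℂ) - 1) * ((N : ℂ) - 1) * z ^ k = 0) ∧
      (∀ w : ℂ, ‖w‖ < (3 - Real.sqrt 5) / 2 →
        1 + (2 - (N : ℂ)) * (∑ i ∈ Finset.Ico 1 k, w ^ i) +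
          ((a : ℂ) - 1) * ((N : ℂ) - 1) * w ^ k = 0 → w = z) ∧
      z.im = 0 := by
  have hsqrt₅ : Real.sqrt 5 < 2.2361 := (Real.sqrt_lt' (by norm_num)).mpr (by norm_num)
  have hsqrt₅' : 2.236 < Real.sqrt 5 := (Real.lt_sqrt (by norm_num)).mpr (by norm_num)
  have hN' : (9 : ℝ) ≤ N := by exact_mod_cast hN
  have ha : a - 1 ≤ 1.285 := by nlinarith [Real.sqrt_nonneg 5]
  set b : ℝ := 2 - N
  set c : ℝ := (a - 1) * (N - 1)
  have hb : b ≤ -7 := by linarith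
  have hc₀ : 0 ≤ c := mul_nonneg (by linarith) (by linarith)
  have hc : c ≤ 1.285 * (1 - b) := by
    simp only [c, b]
    nlinarith
  have hP (w : ℂ) : 1 + (2 - (N : ℂ)) * (∑ i ∈ Finset.Ico 1 k, w ^ i) +
      ((a : ℂ) - 1) * ((N : ℂ) - 1) * w ^ k = growthDenom k (b : ℂ) c w := by
    simp only [growthDenom, b, c]
    push_cast
    ring
  obtain ⟨x, ⟨hx₀, hx₃⟩, hx⟩ := exists_root_growthDenom hb hc₀ hc hk
  have hxℂ : growthDenom k (b : ℂ) c x = 0 := by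
    have := map_growthDenom Complex.ofRealHom k b c x
    rw [hx, map_zero] at this
    exact this.symm
  have hnorm_x : ‖(x : ℂ)‖ = x := Complex.norm_of_nonneg hx₀.le
  refine ⟨x, ⟨by linarith, (hP x).trans hxℂ⟩, fun w hw hw₀ => ?_, Complex.ofReal_im x⟩
  rw [hP] at hw₀
  exact eq_of_growthDenom_eq_zero (hb.trans (by norm_num)) hc₀ hc hk
    (norm_le_of_growthDenom_eq_zero hb hc₀ hc hk (by linarith) hw₀)
    (norm_le_of_growthDenom_eq_zero hb hc₀ hc hk (by linarith) hxℂ) hw₀ hxℂ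

end Paper
end
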